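/- The set ACVENN is convex: if σ₁ and σ₂ are two-qubit states belonging to ACVENN and λ ∈ [0,1], then λσ₁ + (1−λ)σ₂ belongs to ACVENN. -/

import Mathlib

open Matrix Finset
open scoped Kronecker ComplexOrder Classical

noncomputable section

/-- A quantum state: positive semidefinite matrix of trace 1. -/
def IsState {n : ℕ} (ρ : Matrix (Fin n) (Fin n) ℂ) : Prop :=
  ρ.PosSemidef ∧ ρ.trace = 1

/-- Von Neumann entropy `S(ρ) = -∑ᵢ λᵢ log₂ λᵢ` over the eigenvalues of `ρ`
(with the convention `0 · log₂ 0 = 0`, which holds since `Real.logb 2 0 = 0`). -/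
noncomputable def vnEntropy {n : ℕ} (ρ : Matrix (Fin n) (Fin n) ℂ) : ℝ :=
  if h : ρ.IsHermitian then -∑ i, h.eigenvalues i * Real.logb 2 (h.eigenvalues i) else 0

/-- Reduced state `ρ_A`: partial trace over the second tensor factor,
using the ordered product basis `|00⟩,|01⟩,|10⟩,|11⟩`, i.e. `|ab⟩ ↦ 2a+b`. -/
def ptraceB (ρ : Matrix (Fin 4) (Fin 4) ℂ) : Matrix (Fin 2) (Fin 2) ℂ :=
  Matrix.of fun i j => ∑ k : Fin 2,
    ρ ⟨2 * i.val + k.val, by omega⟩ ⟨2 * j.val + k.val, by omega⟩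

/-- Reduced state `ρ_B`: partial trace over the first tensor factor. -/
def ptraceA (ρ : Matrix (Fin 4) (Fin 4) ℂ) : Matrix (Fin 2) (Fin 2) ℂ :=
  Matrix.of fun i j => ∑ k : Fin 2,
    ρ ⟨2 * k.val + i.val, by omega⟩ ⟨2 * k.val + j.val, by omega⟩

/-- Conditional von Neumann entropy `S(A|B) = S(ρ_AB) - S(ρ_A)`. -/
def condEntropy (ρ : Matrix (Fin 4) (Fin 4) ℂ) : ℝ :=
  vnEntropy ρ - vnEntropy (ptraceB ρ)

/-- Rank-one projector `|v⟩⟨v|`. -/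
def proj (v : Fin 4 → ℂ) : Matrix (Fin 4) (Fin 4) ℂ := Matrix.vecMulVec v (star v)

/-- The Bell basis `|φ⁺⟩, |φ⁻⟩, |ψ⁺⟩, |ψ⁻⟩`. -/
noncomputable def bell : Fin 4 → Fin 4 → ℂ :=
  ![![(Real.sqrt 2 : ℂ)⁻¹, 0, 0, (Real.sqrt 2 : ℂ)⁻¹],
    ![(Real.sqrt 2 : ℂ)⁻¹, 0, 0, -(Real.sqrt 2 : ℂ)⁻¹],
    ![0, (Real.sqrt 2 : ℂ)⁻¹, (Real.sqrt 2 : ℂ)⁻¹, 0],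
    ![0, (Real.sqrt 2 : ℂ)⁻¹, -(Real.sqrt 2 : ℂ)⁻¹, 0]]

/-- Kronecker product of two one-qubit matrices as a `4 × 4` matrix,
with the index identification `(a,b) ↦ 2a+b`. -/
def kron (A B : Matrix (Fin 2) (Fin 2) ℂ) : Matrix (Fin 4) (Fin 4) ℂ :=
  Matrix.reindex finProdFinEquiv finProdFinEquiv (A ⊗ₖ B)

/-!
Conjugating by a unitary does not change `S(σ)`, and a qubit state has entropy at most `1`, so
`S(A|B) ≥ S(σ) - 1` for every `UσU†`. Conversely, the unitary carrying an eigenbasis of `σ` onto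
the Bell basis turns `σ` into a Bell-diagonal state, whose reduced state is maximally mixed, of
entropy exactly `1`. Hence `σ ∈ ACVENN` iff `S(σ) ≥ 1`, and ACVENN is convex as a superlevel set
of the concave function `S`.

Concavity of `S`: in the eigenbasis of `ρ = a σ₁ + b σ₂` the entropy of `ρ` is `∑ᵢ η(ρᵢᵢ)` with
`η = negMulLog₂` concave, and the diagonal of `σₖ` in any orthonormal basis is the image of its
spectrum under the doubly stochastic matrix `(|Cⱼᵢ|²)` of a unitary `C`, so by Jensen it has at
least the entropy of `σₖ`.
-/

def negMulLog₂ (x : ℝ) : ℝ := -(x * Real.logb 2 x)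

lemma negMulLog₂_eq_negMulLog_div (x : ℝ) : negMulLog₂ x = Real.negMulLog x / Real.log 2 := by
  simp only [negMulLog₂, Real.negMulLog, Real.logb]
  ring

lemma concaveOn_negMulLog₂ : ConcaveOn ℝ (Set.Ici 0) negMulLog₂ := by
  have : negMulLog₂ = (Real.log 2)⁻¹ • Real.negMulLog := by
    funext x
    rw [negMulLog₂_eq_negMulLog_div, Pi.smul_apply, smul_eq_mul, inv_mul_eq_div]
  rw [this]
  exact Real.concaveOn_negMulLog.smul (by positivity)

section Spectral

variable {m : ℕ} {A : Matrix (Fin m) (Fin m) ℂ}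

lemma vnEntropy_eq_sum (hA : A.IsHermitian) :
    vnEntropy A = ∑ i, negMulLog₂ (hA.eigenvalues i) := by
  rw [vnEntropy, dif_pos hA, ← Finset.sum_neg_distrib]
  rfl

lemma vnEntropy_eq_sum_roots_charpoly (hA : A.IsHermitian) :
    vnEntropy A = (A.charpoly.roots.map fun z => negMulLog₂ z.re).sum := by
  rw [vnEntropy_eq_sum hA, hA.roots_charpoly_eq_eigenvalues, Multiset.map_map]
  simp [Finset.sum, Function.comp_def]

lemma vnEntropy_unitary_conj (hA : A.IsHermitian) {U : Matrix (Fin m) (Fin m) ℂ}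
    (hU : U ∈ unitaryGroup (Fin m) ℂ) : vnEntropy (U * A * Uᴴ) = vnEntropy A := by
  have hcharpoly : (U * A * Uᴴ).charpoly = A.charpoly := by
    rw [charpoly_mul_comm, ← Matrix.mul_assoc, ← star_eq_conjTranspose,
      (mem_unitaryGroup_iff' (A := U)).mp hU, Matrix.one_mul]
  rw [vnEntropy_eq_sum_roots_charpoly (isHermitian_mul_mul_conjTranspose U hA),
    vnEntropy_eq_sum_roots_charpoly hA, hcharpoly]

lemma vnEntropy_diagonal (d : Fin m → ℝ) :
    vnEntropy (diagonal fun i => (d i : ℂ)) = ∑ i, negMulLog₂ (d i) := by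
  have hd : (diagonal fun i => (d i : ℂ)).IsHermitian := by
    simp [IsHermitian, diagonal_conjTranspose, Pi.star_def]
  have hroots : (∏ i, (Polynomial.X - Polynomial.C (d i : ℂ))).roots =
      univ.val.map fun i => (d i : ℂ) := by
    simpa [Multiset.map_map, Function.comp_def, Finset.prod_eq_multiset_prod] using
      Polynomial.roots_multiset_prod_X_sub_C (univ.val.map fun i => (d i : ℂ))
  rw [vnEntropy_eq_sum_roots_charpoly hd, charpoly_diagonal, hroots, Multiset.map_map]
  simp [Finset.sum]

lemma Matrix.IsHermitian.conjTranspose_eigenvectorUnitary_mul_mul (hA : A.IsHermitian) :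
    (hA.eigenvectorUnitary : Matrix (Fin m) (Fin m) ℂ)ᴴ * A * hA.eigenvectorUnitary =
      diagonal fun i => (hA.eigenvalues i : ℂ) := by
  have h := hA.conjStarAlgAut_star_eigenvectorUnitary
  rw [Unitary.conjStarAlgAut_star_apply] at h
  rw [← star_eq_conjTranspose]
  exact h

lemma sum_eigenvalues_eq_one (hA : IsState A) : ∑ i, hA.1.isHermitian.eigenvalues i = 1 := by
  have h := hA.1.isHermitian.trace_eq_sum_eigenvalues.symm.trans hA.2
  rw [← RCLike.ofReal_sum] at h
  exact Complex.ofReal_injective (h.trans Complex.ofReal_one.symm)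

end Spectral

section Majorization

variable {n : Type*} [Fintype n] [DecidableEq n]

lemma ConcaveOn.sum_le_sum_mulVec_of_mem_doublyStochastic {s : Set ℝ} {f : ℝ → ℝ}
    (hf : ConcaveOn ℝ s f) {M : Matrix n n ℝ} (hM : M ∈ doublyStochastic ℝ n) {x : n → ℝ}
    (hx : ∀ j, x j ∈ s) : ∑ j, f (x j) ≤ ∑ i, f ((M *ᵥ x) i) :=
  calc ∑ j, f (x j) = ∑ j, (∑ i, M i j) * f (x j) := by
        simp only [sum_col_of_mem_doublyStochastic hM, one_mul]
    _ = ∑ i, ∑ j, M i j • f (x j) := by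
        simp only [Finset.sum_mul, smul_eq_mul]
        exact Finset.sum_comm
    _ ≤ ∑ i, f (∑ j, M i j • x j) := Finset.sum_le_sum fun i _ =>
        hf.le_map_sum (fun j _ => nonneg_of_mem_doublyStochastic hM)
          (sum_row_of_mem_doublyStochastic hM i) fun j _ => hx j
    _ = ∑ i, f ((M *ᵥ x) i) := by simp only [mulVec, dotProduct, smul_eq_mul]

lemma Matrix.map_normSq_mem_doublyStochastic {U : Matrix n n ℂ}
    (hU : U ∈ unitaryGroup n ℂ) : U.map Complex.normSq ∈ doublyStochastic ℝ n := by
  have hrow : ∀ i, ∑ j, Complex.normSq (U i j) = 1 := fun i => Complex.ofReal_injective <| by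
    simpa [mul_apply, Complex.mul_conj] using congrFun (congrFun (mem_unitaryGroup_iff.mp hU) i) i
  have hcol : ∀ j, ∑ i, Complex.normSq (U i j) = 1 := fun j => Complex.ofReal_injective <| by
    simpa [mul_apply, mul_comm _ (U _ j), Complex.mul_conj] using
      congrFun (congrFun (mem_unitaryGroup_iff'.mp hU) j) j
  exact mem_doublyStochastic_iff_sum.mpr ⟨fun i j => Complex.normSq_nonneg _, hrow, hcol⟩

lemma Matrix.re_conjTranspose_mul_diagonal_mul_apply_self (U : Matrix n n ℂ) (d : n → ℝ)
    (i : n) :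
    ((Uᴴ * diagonal (fun j => (d j : ℂ)) * U) i i).re = ((U.map Complex.normSq)ᵀ *ᵥ d) i := by
  simp only [mul_apply, diagonal_apply, mul_ite, mul_zero, Finset.sum_ite_eq', Finset.mem_univ,
    if_true, Complex.re_sum, mulVec, dotProduct, transpose_apply, map_apply, conjTranspose_apply]
  refine Finset.sum_congr rfl fun j _ => ?_
  rw [mul_right_comm, Complex.star_def, mul_comm ((starRingEnd ℂ) _), Complex.mul_conj,
    ← Complex.ofReal_mul, Complex.ofReal_re]

end Majorization

lemma convex_setOf_posSemidef {n 𝕜 : Type*} [Fintype n] [RCLike 𝕜] :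
    Convex ℝ {A : Matrix n n 𝕜 | A.PosSemidef} :=
  fun _ hA _ hB _ _ ha hb _ => (hA.smul ha).add (hB.smul hb)

lemma convex_setOf_isState {m : ℕ} : Convex ℝ {ρ : Matrix (Fin m) (Fin m) ℂ | IsState ρ} := by
  intro A hA B hB a b ha hb hab
  refine ⟨convex_setOf_posSemidef hA.1 hB.1 ha hb hab, ?_⟩
  rw [trace_add, trace_smul, trace_smul, hA.2, hB.2, ← add_smul, hab, one_smul]

section Concavity

variable {m : ℕ}

/-- Schur concavity of the entropy: the diagonal of `A` in any orthonormal basis is majorized by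
its spectrum. -/
lemma vnEntropy_le_sum_negMulLog₂_diag {A : Matrix (Fin m) (Fin m) ℂ} (hA : A.PosSemidef)
    {V : Matrix (Fin m) (Fin m) ℂ} (hV : V ∈ unitaryGroup (Fin m) ℂ) :
    vnEntropy A ≤ ∑ i, negMulLog₂ ((Vᴴ * A * V) i i).re := by
  set W : Matrix (Fin m) (Fin m) ℂ := ↑hA.isHermitian.eigenvectorUnitary
  have hWV : Wᴴ * V ∈ unitaryGroup (Fin m) ℂ :=
    mul_mem (Unitary.star_mem hA.isHermitian.eigenvectorUnitary.2) hV
  have hspec : Vᴴ * A * V =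
      (Wᴴ * V)ᴴ * diagonal (fun j => (hA.isHermitian.eigenvalues j : ℂ)) * (Wᴴ * V) := by
    conv_lhs => rw [hA.isHermitian.spectral_theorem, Unitary.conjStarAlgAut_apply]
    simp only [conjTranspose_mul, conjTranspose_conjTranspose, Matrix.mul_assoc,
      star_eq_conjTranspose]
    rfl
  simp_rw [hspec, re_conjTranspose_mul_diagonal_mul_apply_self, vnEntropy_eq_sum hA.isHermitian]
  exact concaveOn_negMulLog₂.sum_le_sum_mulVec_of_mem_doublyStochastic
    (transpose_mem_doublyStochastic_iff.mpr (map_normSq_mem_doublyStochastic hWV))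
    fun j => hA.eigenvalues_nonneg j

lemma concaveOn_vnEntropy :
    ConcaveOn ℝ {A : Matrix (Fin m) (Fin m) ℂ | A.PosSemidef} vnEntropy := by
  refine ⟨convex_setOf_posSemidef, fun A hA B hB a b ha hb hab => ?_⟩
  have hρ : (a • A + b • B).PosSemidef := convex_setOf_posSemidef hA hB ha hb hab
  set V : Matrix (Fin m) (Fin m) ℂ := ↑hρ.isHermitian.eigenvectorUnitary
  have hV : V ∈ unitaryGroup (Fin m) ℂ := hρ.isHermitian.eigenvectorUnitary.2
  set x : Fin m → ℝ := fun i => ((Vᴴ * A * V) i i).re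
  set y : Fin m → ℝ := fun i => ((Vᴴ * B * V) i i).re
  have hx : ∀ i, x i ∈ Set.Ici 0 := fun i =>
    (Complex.nonneg_iff.mp (hA.conjTranspose_mul_mul_same V).diag_nonneg).1
  have hy : ∀ i, y i ∈ Set.Ici 0 := fun i =>
    (Complex.nonneg_iff.mp (hB.conjTranspose_mul_mul_same V).diag_nonneg).1
  have hdiag : ∀ i, hρ.isHermitian.eigenvalues i = a * x i + b * y i := fun i => by
    have h := congrArg (fun M => (M i i).re) hρ.isHermitian.conjTranspose_eigenvectorUnitary_mul_mul
    simpa [x, y, V, Matrix.mul_add, Matrix.add_mul] using h.symm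
  calc a • vnEntropy A + b • vnEntropy B
      ≤ a * ∑ i, negMulLog₂ (x i) + b * ∑ i, negMulLog₂ (y i) := by
        rw [smul_eq_mul, smul_eq_mul]
        gcongr
        · exact vnEntropy_le_sum_negMulLog₂_diag hA hV
        · exact vnEntropy_le_sum_negMulLog₂_diag hB hV
    _ = ∑ i, (a • negMulLog₂ (x i) + b • negMulLog₂ (y i)) := by
        simp only [Finset.mul_sum, Finset.sum_add_distrib, smul_eq_mul]
    _ ≤ ∑ i, negMulLog₂ (a • x i + b • y i) :=
        Finset.sum_le_sum fun i _ => concaveOn_negMulLog₂.2 (hx i) (hy i) ha hb hab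
    _ = vnEntropy (a • A + b • B) := by
        simp only [vnEntropy_eq_sum hρ.isHermitian, hdiag, smul_eq_mul]

end Concavity

lemma vnEntropy_le_one_of_isState {ρ : Matrix (Fin 2) (Fin 2) ℂ} (hρ : IsState ρ) :
    vnEntropy ρ ≤ 1 := by
  have hsum := sum_eigenvalues_eq_one hρ
  rw [Fin.sum_univ_two] at hsum
  rw [vnEntropy_eq_sum hρ.1.isHermitian, Fin.sum_univ_two, eq_sub_of_add_eq' hsum,
    negMulLog₂_eq_negMulLog_div, negMulLog₂_eq_negMulLog_div, ← add_div,
    ← Real.binEntropy_eq_negMulLog_add_negMulLog_one_sub, div_le_one (by positivity)]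
  exact Real.binEntropy_le_log_two

lemma vnEntropy_two_inv_smul_one : vnEntropy ((2⁻¹ : ℂ) • (1 : Matrix (Fin 2) (Fin 2) ℂ)) = 1 := by
  have h : (2⁻¹ : ℂ) • (1 : Matrix (Fin 2) (Fin 2) ℂ) = diagonal fun _ => ((2⁻¹ : ℝ) : ℂ) := by
    rw [smul_one_eq_diagonal]; push_cast; rfl
  rw [h, vnEntropy_diagonal, Fin.sum_univ_two, negMulLog₂, Real.logb_inv,
    Real.logb_self_eq_one one_lt_two]
  norm_num

lemma ptraceB_eq (ρ : Matrix (Fin 4) (Fin 4) ℂ) :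
    ptraceB ρ = !![ρ 0 0 + ρ 1 1, ρ 0 2 + ρ 1 3; ρ 2 0 + ρ 3 1, ρ 2 2 + ρ 3 3] := by
  ext i j
  fin_cases i <;> fin_cases j <;> simp [ptraceB, Fin.sum_univ_two]

lemma trace_ptraceB (ρ : Matrix (Fin 4) (Fin 4) ℂ) : (ptraceB ρ).trace = ρ.trace := by
  rw [ptraceB_eq, trace_fin_two_of, trace, Fin.sum_univ_four]
  simp only [diag_apply]
  ring

lemma Matrix.PosSemidef.ptraceB {ρ : Matrix (Fin 4) (Fin 4) ℂ} (hρ : ρ.PosSemidef) :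
    (ptraceB ρ).PosSemidef := by
  let E₀ : Matrix (Fin 4) (Fin 2) ℂ := !![1, 0; 0, 0; 0, 1; 0, 0]
  let E₁ : Matrix (Fin 4) (Fin 2) ℂ := !![0, 0; 1, 0; 0, 0; 0, 1]
  have hkraus : _root_.ptraceB ρ = E₀ᴴ * ρ * E₀ + E₁ᴴ * ρ * E₁ := by
    rw [ptraceB_eq]
    ext i j
    fin_cases i <;> fin_cases j <;> simp [E₀, E₁, mul_apply, Fin.sum_univ_four]
  rw [hkraus]
  exact (hρ.conjTranspose_mul_mul_same E₀).add (hρ.conjTranspose_mul_mul_same E₁)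

lemma IsState.ptraceB {ρ : Matrix (Fin 4) (Fin 4) ℂ} (hρ : IsState ρ) : IsState (ptraceB ρ) :=
  ⟨hρ.1.ptraceB, (trace_ptraceB ρ).trans hρ.2⟩

def bellUnitary : Matrix (Fin 4) (Fin 4) ℂ := (Matrix.of bell)ᵀ

lemma inv_sqrt_two_sq : ((√2 : ℂ))⁻¹ ^ 2 = 2⁻¹ := by
  rw [inv_pow, ← Complex.ofReal_pow, Real.sq_sqrt zero_le_two, Complex.ofReal_ofNat]

lemma bellUnitary_mem_unitaryGroup : bellUnitary ∈ unitaryGroup (Fin 4) ℂ := by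
  rw [mem_unitaryGroup_iff']
  ext i j
  fin_cases i <;> fin_cases j <;>
    simp [bellUnitary, bell, mul_apply, Fin.sum_univ_four, Complex.conj_ofReal] <;>
      linear_combination 2 * inv_sqrt_two_sq

lemma ptraceB_bellUnitary_mul_diagonal_mul (d : Fin 4 → ℝ) (hd : ∑ i, d i = 1) :
    ptraceB (bellUnitary * diagonal (fun i => (d i : ℂ)) * bellUnitaryᴴ) = (2⁻¹ : ℂ) • 1 := by
  have hdc : (d 0 : ℂ) + d 1 + d 2 + d 3 = 1 := by
    rw [Fin.sum_univ_four] at hd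
    exact_mod_cast hd
  rw [ptraceB_eq]
  ext i j
  fin_cases i <;> fin_cases j <;>
    simp [bellUnitary, bell, mul_apply, Fin.sum_univ_four, Complex.conj_ofReal, diagonal] <;>
    linear_combination (2⁻¹ : ℂ) * hdc + (d 0 + d 1 + d 2 + d 3 : ℂ) * inv_sqrt_two_sq

lemma IsState.unitary_conj {m : ℕ} {ρ U : Matrix (Fin m) (Fin m) ℂ} (hρ : IsState ρ)
    (hU : U ∈ unitaryGroup (Fin m) ℂ) : IsState (U * ρ * Uᴴ) := by
  refine ⟨hρ.1.mul_mul_conjTranspose_same U, ?_⟩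
  rw [trace_mul_cycle, ← star_eq_conjTranspose, (mem_unitaryGroup_iff').mp hU, Matrix.one_mul,
    hρ.2]

lemma forall_condEntropy_unitary_conj_nonneg_iff {σ : Matrix (Fin 4) (Fin 4) ℂ} (hσ : IsState σ) :
    (∀ U ∈ unitaryGroup (Fin 4) ℂ, 0 ≤ condEntropy (U * σ * Uᴴ)) ↔ 1 ≤ vnEntropy σ := by
  have hσH : σ.IsHermitian := hσ.1.isHermitian
  constructor
  · intro h
    set V : Matrix (Fin 4) (Fin 4) ℂ := ↑hσH.eigenvectorUnitary
    have hU : bellUnitary * Vᴴ ∈ unitaryGroup (Fin 4) ℂ :=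
      mul_mem bellUnitary_mem_unitaryGroup (Unitary.star_mem hσH.eigenvectorUnitary.2)
    have hconj : bellUnitary * Vᴴ * σ * (bellUnitary * Vᴴ)ᴴ =
        bellUnitary * diagonal (fun i => (hσH.eigenvalues i : ℂ)) * bellUnitaryᴴ := by
      rw [← hσH.conjTranspose_eigenvectorUnitary_mul_mul]
      simp only [conjTranspose_mul, conjTranspose_conjTranspose, Matrix.mul_assoc, V]
    have hcond := h _ hU
    rw [condEntropy, vnEntropy_unitary_conj hσH hU, hconj,
      ptraceB_bellUnitary_mul_diagonal_mul _ (sum_eigenvalues_eq_one hσ),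
      vnEntropy_two_inv_smul_one] at hcond
    linarith
  · intro h U hU
    have hreduced := vnEntropy_le_one_of_isState (hσ.unitary_conj hU).ptraceB
    rw [condEntropy, vnEntropy_unitary_conj hσH hU]
    linarith

/-- ACVENN is convex. -/
theorem stmt_3 (σ₁ σ₂ : Matrix (Fin 4) (Fin 4) ℂ)
    (hσ₁ : IsState σ₁) (hσ₂ : IsState σ₂)
    (h₁ : ∀ U ∈ Matrix.unitaryGroup (Fin 4) ℂ, 0 ≤ condEntropy (U * σ₁ * Uᴴ))
    (h₂ : ∀ U ∈ Matrix.unitaryGroup (Fin 4) ℂ, 0 ≤ condEntropy (U * σ₂ * Uᴴ))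
    (l : ℝ) (hl : l ∈ Set.Icc (0 : ℝ) 1) :
    IsState ((l : ℂ) • σ₁ + ((1 - l : ℝ) : ℂ) • σ₂) ∧
    ∀ U ∈ Matrix.unitaryGroup (Fin 4) ℂ,
      0 ≤ condEntropy (U * ((l : ℂ) • σ₁ + ((1 - l : ℝ) : ℂ) • σ₂) * Uᴴ) := by
  have hconvex : Convex ℝ {ρ ∈ {ρ : Matrix (Fin 4) (Fin 4) ℂ | IsState ρ} | 1 ≤ vnEntropy ρ} :=
    (concaveOn_vnEntropy.subset (fun _ hρ => hρ.1) convex_setOf_isState).convex_ge 1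
  obtain ⟨hstate, hentropy⟩ :=
    hconvex ⟨hσ₁, (forall_condEntropy_unitary_conj_nonneg_iff hσ₁).mp h₁⟩
      ⟨hσ₂, (forall_condEntropy_unitary_conj_nonneg_iff hσ₂).mp h₂⟩ hl.1 (sub_nonneg.mpr hl.2)
      (add_sub_cancel l 1)
  simp only [RCLike.real_smul_eq_coe_smul (K := ℂ)] at hstate hentropy
  exact ⟨hstate, (forall_condEntropy_unitary_conj_nonneg_iff hstate).mpr hentropy⟩
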